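/- Let (i₁, i₂, j₁, j₂) be a Milnor square with j₂ surjective. Then the map Λ₁ ⊗_Λ Λ₂ → Λ' defined by λ₁ ⊗ λ₂ ↦ j₁(λ₁)·j₂(λ₂) is an isomorphism of (Λ₁, Λ₂)-bimodules; in particular the pair (i₁, i₂) is exact. -/

import Mathlib

/-!
Because `Λ` is the pullback and `j₂` is surjective, `i₁` is surjective as well. Hence every
tensor can be rewritten as `a ⊗ b = i₁ l ⊗ b = 1 ⊗ i₂ l * b`, so `Λ₁ ⊗_Λ Λ₂` consists of the
tensors `1 ⊗ b`, on which `θ` is `j₂`. If `j₂ b = 0 = j₁ 0`, the pullback property gives `l`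
with `i₁ l = 0` and `i₂ l = b`, so `1 ⊗ b = i₁ l ⊗ 1 = 0`: `θ` is injective.
-/

open scoped TensorProduct

universe u

/-- Tensor product over `Λ` of a right `Λ`-module and a left `Λ`-module. -/
noncomputable abbrev tensorOver (Λ : Type u) [Ring Λ] {A B : Type u}
    [AddCommGroup A] [AddCommGroup B]
    (ract : A → Λ → A) (lact : Λ → B → B) : Type u :=
  (TensorProduct ℤ A B) ⧸
    AddSubgroup.closure {x : TensorProduct ℤ A B |
      ∃ (a : A) (r : Λ) (b : B), x = (ract a r) ⊗ₜ[ℤ] b - a ⊗ₜ[ℤ] (lact r b)}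

section
variable {Λ Λ₁ Λ₂ Λ' : Type u} [Ring Λ] [Ring Λ₁] [Ring Λ₂] [Ring Λ']

/-- `Λ₁ ⊗_Λ Λ₂`, where `Λ₁` is a right `Λ`-module via `i₁` and `Λ₂` a left
`Λ`-module via `i₂`. -/
noncomputable abbrev Tens12 (i₁ : Λ →+* Λ₁) (i₂ : Λ →+* Λ₂) : Type u :=
  tensorOver Λ (fun (a : Λ₁) (l : Λ) => a * i₁ l) (fun (l : Λ) (b : Λ₂) => i₂ l * b)

/-- The elementary tensor `a ⊗ b` in `Λ₁ ⊗_Λ Λ₂`. -/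
noncomputable def e12 (i₁ : Λ →+* Λ₁) (i₂ : Λ →+* Λ₂) (a : Λ₁) (b : Λ₂) : Tens12 i₁ i₂ :=
  QuotientAddGroup.mk (a ⊗ₜ[ℤ] b)

section Tens12

variable (i₁ : Λ →+* Λ₁) (i₂ : Λ →+* Λ₂)

lemma e12_mul_map_left (a : Λ₁) (l : Λ) (b : Λ₂) :
    e12 i₁ i₂ (a * i₁ l) b = e12 i₁ i₂ a (i₂ l * b) :=
  (QuotientAddGroup.eq_iff_sub_mem).2 (AddSubgroup.subset_closure ⟨a, l, b, rfl⟩)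

lemma e12_map_one (l : Λ) : e12 i₁ i₂ (i₁ l) 1 = e12 i₁ i₂ 1 (i₂ l) := by
  simpa only [one_mul, mul_one] using e12_mul_map_left i₁ i₂ 1 l 1

lemma e12_zero_left (b : Λ₂) : e12 i₁ i₂ 0 b = 0 := by
  rw [e12, TensorProduct.zero_tmul, QuotientAddGroup.mk_zero]

lemma e12_zero_right (a : Λ₁) : e12 i₁ i₂ a 0 = 0 := by
  rw [e12, TensorProduct.tmul_zero, QuotientAddGroup.mk_zero]

lemma e12_add_right (a : Λ₁) (b b' : Λ₂) :
    e12 i₁ i₂ a (b + b') = e12 i₁ i₂ a b + e12 i₁ i₂ a b' := by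
  rw [e12, TensorProduct.tmul_add, QuotientAddGroup.mk_add]; rfl

lemma e12_neg_right (a : Λ₁) (b : Λ₂) : e12 i₁ i₂ a (-b) = -e12 i₁ i₂ a b := by
  rw [e12, TensorProduct.tmul_neg, QuotientAddGroup.mk_neg]; rfl

variable {i₁ i₂}

lemma exists_eq_e12_one_of_surjective (hi₁ : Function.Surjective i₁) (x : Tens12 i₁ i₂) :
    ∃ b : Λ₂, x = e12 i₁ i₂ 1 b := by
  obtain ⟨t, rfl⟩ := QuotientAddGroup.mk_surjective x
  induction t using TensorProduct.induction_on with
  | zero => exact ⟨0, (e12_zero_right i₁ i₂ 1).symm⟩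
  | tmul a b =>
    obtain ⟨l, rfl⟩ := hi₁ a
    refine ⟨i₂ l * b, show e12 i₁ i₂ (i₁ l) b = _ from ?_⟩
    simpa only [one_mul] using e12_mul_map_left i₁ i₂ 1 l b
  | add s t hs ht =>
    obtain ⟨b, hb⟩ := hs
    obtain ⟨b', hb'⟩ := ht
    exact ⟨b + b', by rw [QuotientAddGroup.mk_add, hb, hb', e12_add_right]⟩

lemma exists_eq_e12_sub_of_surjective (hi₁ : Function.Surjective i₁) (x : Tens12 i₁ i₂) :
    ∃ (a : Λ₁) (b : Λ₂), x = e12 i₁ i₂ a 1 - e12 i₁ i₂ 1 b := by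
  obtain ⟨b, rfl⟩ := exists_eq_e12_one_of_surjective hi₁ x
  exact ⟨0, -b, by rw [e12_zero_left, e12_neg_right, zero_sub, neg_neg]⟩

end Tens12

section Pullback

variable {i₁ : Λ →+* Λ₁} {i₂ : Λ →+* Λ₂} {j₁ : Λ₁ →+* Λ'} {j₂ : Λ₂ →+* Λ'}

lemma surjective_of_isPullback_of_surjective
    (hpb : ∀ (a : Λ₁) (b : Λ₂), j₁ a = j₂ b → ∃! l : Λ, i₁ l = a ∧ i₂ l = b)
    (hsurj : Function.Surjective j₂) : Function.Surjective i₁ := by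
  intro a
  obtain ⟨b, hb⟩ := hsurj (j₁ a)
  obtain ⟨l, ⟨hl, -⟩, -⟩ := hpb a b hb.symm
  exact ⟨l, hl⟩

lemma injective_prodMk_of_isPullback (hcomm : j₁.comp i₁ = j₂.comp i₂)
    (hpb : ∀ (a : Λ₁) (b : Λ₂), j₁ a = j₂ b → ∃! l : Λ, i₁ l = a ∧ i₂ l = b) :
    Function.Injective (fun l : Λ => (i₁ l, i₂ l)) := by
  intro l l' h
  obtain ⟨h₁, h₂⟩ := Prod.mk.inj h
  exact (hpb (i₁ l) (i₂ l) (RingHom.congr_fun hcomm l)).unique ⟨rfl, rfl⟩ ⟨h₁.symm, h₂.symm⟩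

variable {θ : Tens12 i₁ i₂ →+ Λ'}

lemma e12_one_eq_iff_of_isPullback
    (hpb : ∀ (a : Λ₁) (b : Λ₂), j₁ a = j₂ b → ∃! l : Λ, i₁ l = a ∧ i₂ l = b)
    (hθ : ∀ (a : Λ₁) (b : Λ₂), θ (e12 i₁ i₂ a b) = j₁ a * j₂ b) (a : Λ₁) (b : Λ₂) :
    e12 i₁ i₂ a 1 = e12 i₁ i₂ 1 b ↔ ∃ l : Λ, i₁ l = a ∧ i₂ l = b := by
  constructor
  · intro h
    have hj : j₁ a = j₂ b := by
      simpa only [hθ, map_one, mul_one, one_mul] using congrArg θ h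
    exact (hpb a b hj).exists
  · rintro ⟨l, rfl, rfl⟩
    exact e12_map_one i₁ i₂ l

lemma bijective_of_isPullback_of_surjective
    (hpb : ∀ (a : Λ₁) (b : Λ₂), j₁ a = j₂ b → ∃! l : Λ, i₁ l = a ∧ i₂ l = b)
    (hsurj : Function.Surjective j₂)
    (hθ : ∀ (a : Λ₁) (b : Λ₂), θ (e12 i₁ i₂ a b) = j₁ a * j₂ b) : Function.Bijective θ := by
  have hθ_one (b : Λ₂) : θ (e12 i₁ i₂ 1 b) = j₂ b := by rw [hθ, map_one, one_mul]
  have hi₁ := surjective_of_isPullback_of_surjective hpb hsurj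
  refine ⟨(injective_iff_map_eq_zero θ).2 fun x hx => ?_, fun y => ?_⟩
  · obtain ⟨b, rfl⟩ := exists_eq_e12_one_of_surjective hi₁ x
    rw [hθ_one] at hx
    obtain ⟨l, ⟨hl₁, rfl⟩, -⟩ := hpb 0 b (by rw [map_zero, hx])
    rw [← e12_map_one, hl₁, e12_zero_left]
  · obtain ⟨b, rfl⟩ := hsurj y
    exact ⟨e12 i₁ i₂ 1 b, hθ_one b⟩

end Pullback

/-- For a Milnor square `(i₁, i₂, j₁, j₂)` with `j₂` surjective, the
map `Λ₁ ⊗_Λ Λ₂ → Λ'`, `a ⊗ b ↦ j₁(a)·j₂(b)`, is an isomorphism of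
`(Λ₁, Λ₂)`-bimodules; in particular the pair `(i₁, i₂)` is exact (i.e.
`(i₁, i₂, Λ₁ ⊗_Λ Λ₂, 1 ⊗ 1)` is an exact context). -/
theorem stmt9 (i₁ : Λ →+* Λ₁) (i₂ : Λ →+* Λ₂) (j₁ : Λ₁ →+* Λ') (j₂ : Λ₂ →+* Λ')
    (hcomm : j₁.comp i₁ = j₂.comp i₂)
    (hpb : ∀ (a : Λ₁) (b : Λ₂), j₁ a = j₂ b → ∃! l : Λ, i₁ l = a ∧ i₂ l = b)
    (hsurj : Function.Surjective j₂)
    (θ : Tens12 i₁ i₂ →+ Λ')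
    (hθ : ∀ (a : Λ₁) (b : Λ₂), θ (e12 i₁ i₂ a b) = j₁ a * j₂ b) :
    Function.Bijective θ ∧
    (Function.Injective (fun l : Λ => (i₁ l, i₂ l)) ∧
     (∀ (a : Λ₁) (b : Λ₂),
        e12 i₁ i₂ a 1 = e12 i₁ i₂ 1 b ↔ ∃ l : Λ, i₁ l = a ∧ i₂ l = b) ∧
     (∀ x : Tens12 i₁ i₂, ∃ (a : Λ₁) (b : Λ₂),
        x = e12 i₁ i₂ a 1 - e12 i₁ i₂ 1 b)) :=
  ⟨bijective_of_isPullback_of_surjective hpb hsurj hθ,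
    injective_prodMk_of_isPullback hcomm hpb,
    e12_one_eq_iff_of_isPullback hpb hθ,
    exists_eq_e12_sub_of_surjective (surjective_of_isPullback_of_surjective hpb hsurj)⟩

end
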